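/- For every integer m ≥ 1, the map T defined by Tx = H^(m)x is a linear bijection from the Hilbert difference sequence space h_∞(Δ^(m)) onto the space ℓ∞ of bounded real sequences, and it is norm-preserving when h_∞(Δ^(m)) carries the norm ‖x‖ = sup_n |(H^(m)x)_n| and ℓ∞ carries the sup norm. In particular h_∞(Δ^(m)) is linearly isometrically isomorphic to ℓ∞. -/

import Mathlib

open Filter Finset Topology

/- Real sequences are modelled as functions `ℕ → ℝ`, where the Lean index `n : ℕ`
corresponds to the paper's index `n + 1` (the paper indexes sequences by `k ≥ 1`).
Thus the paper's entry `h_{nk} = ∑_{i=k}^{n} (-1)^{i-k} C(m, i-k) / (n+i-1)`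
(for `1 ≤ k ≤ n`) becomes, with 0-based indices,
`hMat m n k = ∑_{i ∈ Icc k n} (-1)^{i-k} C(m, i-k) / (n+i+1)`. -/

/-- The entries of the triangle matrix `H^(m) = H Δ^(m)` (0-based indexing). -/
noncomputable def hMat (m n k : ℕ) : ℝ :=
  ∑ i ∈ Finset.Icc k n, (-1 : ℝ) ^ (i - k) * (Nat.choose m (i - k) : ℝ) / ((n + i + 1 : ℕ) : ℝ)

/-- The `H^(m)`-transform of a sequence: `(H^(m) x)_n = ∑_{k=1}^{n} h_{nk} x_k`. -/
noncomputable def hTrans (m : ℕ) (x : ℕ → ℝ) (n : ℕ) : ℝ :=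
  ∑ k ∈ Finset.range (n + 1), hMat m n k * x k

/-- `h_0(Δ^(m))`: sequences whose `H^(m)`-transform tends to `0`. -/
def hZero (m : ℕ) : Set (ℕ → ℝ) := {x | Tendsto (hTrans m x) atTop (𝓝 0)}

/-- `h_c(Δ^(m))`: sequences whose `H^(m)`-transform converges. -/
def hConv (m : ℕ) : Set (ℕ → ℝ) := {x | ∃ L : ℝ, Tendsto (hTrans m x) atTop (𝓝 L)}

/-- `h_∞(Δ^(m))`: sequences whose `H^(m)`-transform is bounded. -/
def hBdd (m : ℕ) : Set (ℕ → ℝ) := {x | ∃ M : ℝ, ∀ n, |hTrans m x n| ≤ M}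

/-- The space `c₀` of null real sequences. -/
def c0Seq : Set (ℕ → ℝ) := {y | Tendsto y atTop (𝓝 0)}

/-- The space `c` of convergent real sequences. -/
def cSeq : Set (ℕ → ℝ) := {y | ∃ L : ℝ, Tendsto y atTop (𝓝 L)}

/-- The space `ℓ∞` of bounded real sequences. -/
def linfSeq : Set (ℕ → ℝ) := {y | ∃ M : ℝ, ∀ n, |y n| ≤ M}

/-- The sup norm `‖y‖ = sup_n |y_n|` of a sequence. -/
noncomputable def supNorm (y : ℕ → ℝ) : ℝ := ⨆ n, |y n|

/-- The norm `‖x‖ = sup_n |(H^(m) x)_n|` on the Hilbert difference sequence spaces. -/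
noncomputable def hNorm (m : ℕ) (x : ℕ → ℝ) : ℝ := supNorm (hTrans m x)

/- `H^(m)` is a triangle: lower triangular with diagonal entries `1 / (2n + 1) ≠ 0`. Such a
matrix acts bijectively on all sequences (solve `a x = y` row by row), so it restricts to a
bijection from the preimage `h_∞(Δ^(m))` of `ℓ∞` onto `ℓ∞`; norm preservation holds because
the norm of `h_∞(Δ^(m))` is defined by transport along `H^(m)`. -/

section Triangle

variable {K : Type*} [Field K] (a : ℕ → ℕ → K)

def triangleTransform (x : ℕ → K) (n : ℕ) : K :=
  ∑ k ∈ range (n + 1), a n k * x k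

noncomputable def triangleSolve (y : ℕ → K) : ℕ → K
  | n => (y n - ∑ k ∈ (range n).attach, a n k * triangleSolve y k) / a n n
decreasing_by exact mem_range.mp k.2

variable {a}

theorem triangleTransform_triangleSolve (ha : ∀ n, a n n ≠ 0) (y : ℕ → K) :
    triangleTransform a (triangleSolve a y) = y := by
  funext n
  rw [triangleTransform, sum_range_succ]
  conv_lhs => rw [triangleSolve]
  rw [sum_attach (range n) (fun k => a n k * triangleSolve a y k), mul_div_cancel₀ _ (ha n)]
  ring

theorem triangleTransform_injective (ha : ∀ n, a n n ≠ 0) :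
    Function.Injective (triangleTransform a) := by
  intro x y h
  funext n
  induction n using Nat.strong_induction_on with
  | _ n ih =>
    have hrow := congrFun h n
    have hlower : ∑ k ∈ range n, a n k * x k = ∑ k ∈ range n, a n k * y k :=
      sum_congr rfl fun k hk => by rw [ih k (mem_range.mp hk)]
    rw [triangleTransform, triangleTransform, sum_range_succ, sum_range_succ, hlower] at hrow
    exact mul_left_cancel₀ (ha n) (add_left_cancel hrow)

theorem triangleTransform_linear_combination (c d : K) (x y : ℕ → K) :
    triangleTransform a (fun k => c * x k + d * y k) =
      fun n => c * triangleTransform a x n + d * triangleTransform a y n := by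
  funext n
  simp only [triangleTransform, mul_sum, ← sum_add_distrib]
  exact sum_congr rfl fun k _ => by ring

theorem triangleTransform_bijective (ha : ∀ n, a n n ≠ 0) :
    Function.Bijective (triangleTransform a) :=
  ⟨triangleTransform_injective ha,
    fun y => ⟨triangleSolve a y, triangleTransform_triangleSolve ha y⟩⟩

end Triangle

lemma hTrans_eq_triangleTransform (m : ℕ) : hTrans m = triangleTransform (hMat m) := rfl

lemma hMat_diag_ne_zero (m n : ℕ) : hMat m n n ≠ 0 := by
  simp only [hMat, Icc_self, sum_singleton, Nat.sub_self, pow_zero, Nat.choose_zero_right]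
  positivity

lemma hBdd_eq_preimage_linfSeq (m : ℕ) : hBdd m = hTrans m ⁻¹' linfSeq := rfl

theorem hilbert_diff_hinf_iso_linf_general (m : ℕ) :
    (∀ (a b : ℝ) (x y : ℕ → ℝ),
      hTrans m (fun k => a * x k + b * y k) = fun n => a * hTrans m x n + b * hTrans m y n) ∧
    Set.BijOn (hTrans m) (hBdd m) linfSeq ∧
    (∀ x ∈ hBdd m, hNorm m x = supNorm (hTrans m x)) := by
  have hbij : Function.Bijective (hTrans m) := by
    rw [hTrans_eq_triangleTransform]
    exact triangleTransform_bijective (hMat_diag_ne_zero m)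
  refine ⟨triangleTransform_linear_combination, ?_, fun x _ => rfl⟩
  rw [hBdd_eq_preimage_linfSeq]
  exact hbij.bijOn_preimage

/-- The map `T x = H^(m) x` is a linear, norm-preserving bijection from `hBdd m` onto `linfSeq`. -/
theorem hilbert_diff_hinf_iso_linf (m : ℕ) (hm : 1 ≤ m) :
    (∀ (a b : ℝ) (x y : ℕ → ℝ),
      hTrans m (fun k => a * x k + b * y k) = fun n => a * hTrans m x n + b * hTrans m y n) ∧
    Set.BijOn (hTrans m) (hBdd m) linfSeq ∧
    (∀ x ∈ hBdd m, hNorm m x = supNorm (hTrans m x)) :=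
  hilbert_diff_hinf_iso_linf_general m
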